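/- Let A be a closed, densely defined operator with compact resolvent on a complex Hilbert space H with 0 ∈ ρ(A), and let W be a Hilbert space continuously and densely embedded in H with D(A) ⊂ W (so that A⁻¹ ∈ L(H, W)). Let L > 0 and d = L‖A⁻¹‖_{L(H,W)}. Then σ(A) ∩ {z ∈ ℂ : |z| ≤ L} ⊂ (W(A⁻¹, d))⁻¹. -/

import Mathlib

open Filter Topology Metric

noncomputable section

variable {H : Type*} [NormedAddCommGroup H] [InnerProductSpace ℂ H] [CompleteSpace H]

/-- `R : H →L[ℂ] H` is a (two-sided, everywhere defined) bounded inverse of `A - lam`,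
i.e. `lam` belongs to the resolvent set of `A` with resolvent `R`. -/
def IsResolventAt (A : H →ₗ.[ℂ] H) (lam : ℂ) (R : H →L[ℂ] H) : Prop :=
  (∀ x : A.domain, R (A x - lam • (x : H)) = (x : H)) ∧
  ∀ y : H, ∃ hy : R y ∈ A.domain, A ⟨R y, hy⟩ - lam • R y = y

/-- The resolvent set `ρ(A)` of a (possibly unbounded) operator `A`. -/
def presolventSet (A : H →ₗ.[ℂ] H) : Set ℂ :=
  {lam | ∃ R, IsResolventAt A lam R}

-- The resolvent operator `(A - lam)⁻¹` (with junk value `0` off the resolvent set).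
open scoped Classical in
def resolventOf (A : H →ₗ.[ℂ] H) (lam : ℂ) : H →L[ℂ] H :=
  if h : ∃ R, IsResolventAt A lam R then h.choose else 0

/-- The `ε`-pseudospectrum `σ_ε(A) = {λ : ‖(A-λ)⁻¹‖ > 1/ε}`, where `‖(A-λ)⁻¹‖` is
understood as `∞` for `λ` in the spectrum. -/
def pseudoSpectrum (ε : ℝ) (A : H →ₗ.[ℂ] H) : Set ℂ :=
  {lam | lam ∉ presolventSet A ∨ 1 / ε < ‖resolventOf A lam‖}

/-- The numerical range `W(T) = {⟨T x, x⟩ : ‖x‖ = 1}` of a bounded operator `T`;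
`⟨T x, x⟩` (inner product linear in the first argument) is written as
`inner x (T x)` in the mathlib convention. -/
def numRange (T : H →L[ℂ] H) : Set ℂ :=
  {z | ∃ x : H, ‖x‖ = 1 ∧ z = (inner ℂ x (T x) : ℂ)}

/-- The numerical range of a (possibly unbounded) operator. -/
def pnumRange (A : H →ₗ.[ℂ] H) : Set ℂ :=
  {z | ∃ x : A.domain, ‖(x : H)‖ = 1 ∧ z = (inner ℂ (x : H) (A x) : ℂ)}

/-- The numerical radius of a bounded operator. -/
def nradius (T : H →L[ℂ] H) : ℝ :=
  sSup ((fun z : ℂ => ‖z‖) '' numRange T)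

/-- The numerical range of a bounded operator on a subspace `U` of `H`. -/
def numRangeSub {U : Submodule ℂ H} (T : U →L[ℂ] U) : Set ℂ :=
  {z | ∃ x : U, ‖(x : H)‖ = 1 ∧ z = (inner ℂ (x : H) ((T x : U) : H) : ℂ)}

/-- `B_δ(U) = {z : dist (z, U) < δ}`, the `δ`-neighborhood of a set `U ⊆ ℂ`. -/
def nbhdSet (δ : ℝ) (U : Set ℂ) : Set ℂ :=
  {z | ∃ u ∈ U, dist z u < δ}

/-- `U⁻¹ = {z⁻¹ : z ∈ U \ {0}}`. -/
def invSet (U : Set ℂ) : Set ℂ :=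
  {z | ∃ u ∈ U, u ≠ 0 ∧ z = u⁻¹}

/-- `U + s = {z + s : z ∈ U}`. -/
def shiftSet (U : Set ℂ) (s : ℂ) : Set ℂ :=
  {z | ∃ u ∈ U, z = u + s}

/-!
Since `0 ∈ ρ(A)`, a point `λ ≠ 0` lies in `σ(A)` exactly when `λ⁻¹` lies in the spectrum of the
compact operator `A⁻¹`, where by the Fredholm alternative it is an eigenvalue: `A⁻¹ v = λ⁻¹ v`
with `‖v‖ = 1`. Then `⟨A⁻¹ v, v⟩ = λ⁻¹`, and `v = λ A⁻¹ v` is the image of `w = λ B v ∈ W`,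
where `B` is `A⁻¹` viewed in `L(H, W)`; so `‖w‖_W ≤ |λ| ‖B‖ ≤ L ‖B‖ = d`.
-/

theorem Module.End.HasEigenvalue.exists_norm_eq_one {𝕜 E : Type*} [RCLike 𝕜]
    [NormedAddCommGroup E] [NormedSpace 𝕜 E] {f : Module.End 𝕜 E} {μ : 𝕜}
    (h : f.HasEigenvalue μ) : ∃ v : E, ‖v‖ = 1 ∧ f v = μ • v := by
  obtain ⟨v, hv⟩ := h.exists_hasEigenvector
  refine ⟨(‖v‖⁻¹ : 𝕜) • v, norm_smul_inv_norm hv.2, ?_⟩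
  rw [map_smul, hv.apply_eq_smul, smul_comm]

section

variable {E : Type*} [NormedAddCommGroup E] [InnerProductSpace ℂ E]

lemma isResolventAt_resolventOf {A : E →ₗ.[ℂ] E} {μ : ℂ} (h : μ ∈ presolventSet A) :
    IsResolventAt A μ (resolventOf A μ) := by
  have h' : ∃ R, IsResolventAt A μ R := h
  rw [resolventOf, dif_pos h']
  exact h'.choose_spec

namespace IsResolventAt

variable {A : E →ₗ.[ℂ] E}

theorem sub_eq_smul_mul {lam μ : ℂ} {R S : E →L[ℂ] E} (hR : IsResolventAt A lam R)
    (hS : IsResolventAt A μ S) : R - S = (lam - μ) • (R * S) := by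
  ext y
  obtain ⟨hy, hAy⟩ := hS.2 y
  have h : R (A ⟨S y, hy⟩ - lam • S y) = S y := hR.1 ⟨S y, hy⟩
  rw [show A ⟨S y, hy⟩ - lam • S y = y + (μ - lam) • S y by
    linear_combination (norm := module) hAy, map_add, map_smul] at h
  change R y - S y = (lam - μ) • R (S y)
  linear_combination (norm := module) h

theorem isCompactOperator {lam μ : ℂ} {R S : E →L[ℂ] E} (hR : IsResolventAt A lam R)
    (hS : IsResolventAt A μ S) (hScomp : IsCompactOperator S) : IsCompactOperator R := by
  have hRS : R = S + (lam - μ) • (R * S) := by rw [← hR.sub_eq_smul_mul hS]; abel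
  rw [hRS]
  exact hScomp.add ((hScomp.clm_comp R).smul (lam - μ))

/-- From `R = A⁻¹`, the resolvent at `λ` is `R (1 - λ R)⁻¹`. -/
theorem mem_presolventSet_of_isUnit {lam : ℂ} {R : E →L[ℂ] E} (hR : IsResolventAt A 0 R)
    (hu : IsUnit (1 - lam • R)) : lam ∈ presolventSet A := by
  obtain ⟨u, hu⟩ := hu
  set S : E →L[ℂ] E := ↑u⁻¹
  have hSu (z : E) : S ((u : E →L[ℂ] E) z) = z := congrArg (fun T : E →L[ℂ] E => T z) u.inv_mul
  have huS (z : E) : (u : E →L[ℂ] E) (S z) = z := congrArg (fun T : E →L[ℂ] E => T z) u.mul_inv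
  have hSR : S * R = R * S := by
    refine (Commute.units_inv_left ?_).eq
    rw [hu]
    exact (Commute.one_left R).sub_left ((Commute.refl R).smul_left lam)
  have hRA : ∀ x : A.domain, R (A x) = x := by simpa using hR.1
  refine ⟨R * S, fun x => ?_, fun y => ?_⟩
  · have h : R (A x - lam • (x : E)) = (u : E →L[ℂ] E) x := by
      rw [hu, map_sub, map_smul, hRA]
      rfl
    rw [← hSR]
    change S (R (A x - lam • (x : E))) = x
    rw [h, hSu]
  · obtain ⟨hy, hAy⟩ := hR.2 (S y)
    rw [zero_smul, sub_zero] at hAy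
    refine ⟨hy, ?_⟩
    change A ⟨R (S y), hy⟩ - lam • R (S y) = y
    rw [hAy]
    change (1 - lam • R) (S y) = y
    rw [← hu, huS]

theorem inv_mem_spectrum {lam : ℂ} {R : E →L[ℂ] E} (hR : IsResolventAt A 0 R)
    (hlam : lam ∉ presolventSet A) (hlam0 : lam ≠ 0) : lam⁻¹ ∈ spectrum ℂ R := by
  refine fun hu => hlam (hR.mem_presolventSet_of_isUnit ?_)
  have h : 1 - lam • R = Units.mk0 lam hlam0 • (algebraMap ℂ _ lam⁻¹ - R) := by
    rw [Algebra.algebraMap_eq_smul_one, Units.smul_mk0, smul_sub, smul_smul,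
      mul_inv_cancel₀ hlam0, one_smul]
  rw [h]
  exact (isUnit_smul_iff _ _).2 hu

end IsResolventAt

end

theorem spectrum_inter_ball_subset_inv_restricted_numRange_general
    (A : H →ₗ.[ℂ] H)
    {W : Type*} [NormedAddCommGroup W] [InnerProductSpace ℂ W]
    (ι : W →L[ℂ] H)
    (h0 : (0 : ℂ) ∈ presolventSet A)
    (hcpt : ∃ μ ∈ presolventSet A, IsCompactOperator (⇑(resolventOf A μ) : H → H))
    (Binv : H →L[ℂ] W) (hBinv : ∀ x, ι (Binv x) = resolventOf A 0 x)
    (L : ℝ) (d : ℝ) (hd : d = L * ‖Binv‖) :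
    {z : ℂ | z ∉ presolventSet A} ∩ Metric.closedBall 0 L ⊆
      invSet {z : ℂ | ∃ w : W, ‖ι w‖ = 1 ∧ ‖w‖ ≤ d ∧
        z = (inner ℂ (ι w) (resolventOf A 0 (ι w)) : ℂ)} := by
  rintro lam ⟨hspec, hball⟩
  have hlamL : ‖lam‖ ≤ L := by simpa using hball
  have hlam0 : lam ≠ 0 := by rintro rfl; exact hspec h0
  have hR₀ := isResolventAt_resolventOf h0
  obtain ⟨μ, hμ, hμcomp⟩ := hcpt
  have hR₀comp := hR₀.isCompactOperator (isResolventAt_resolventOf hμ) hμcomp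
  obtain ⟨v, hv1, hv⟩ := ((hR₀comp.hasEigenvalue_iff_mem_spectrum (inv_ne_zero hlam0)).2
    (hR₀.inv_mem_spectrum hspec hlam0)).exists_norm_eq_one
  change resolventOf A 0 v = lam⁻¹ • v at hv
  have hιw : ι (lam • Binv v) = v := by
    rw [map_smul, hBinv, hv, smul_inv_smul₀ hlam0]
  refine ⟨lam⁻¹, ⟨lam • Binv v, by rw [hιw, hv1], ?_, ?_⟩, inv_ne_zero hlam0, (inv_inv lam).symm⟩
  · rw [norm_smul, hd]
    exact mul_le_mul hlamL (Binv.unit_le_opNorm _ hv1.le) (norm_nonneg _)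
      ((norm_nonneg lam).trans hlamL)
  · rw [hιw, hv, inner_smul_right, inner_self_eq_norm_sq_to_K, hv1]
    simp

/-- Proposition 4.2(a). -/
theorem spectrum_inter_ball_subset_inv_restricted_numRange
    (A : H →ₗ.[ℂ] H)
    (hclosed : IsClosed (A.graph : Set (H × H)))
    (hdense : Dense (A.domain : Set H))
    {W : Type*} [NormedAddCommGroup W] [InnerProductSpace ℂ W] [CompleteSpace W]
    (ι : W →L[ℂ] H) (hιinj : Function.Injective ι) (hιdense : DenseRange ι)
    (hdom : (A.domain : Set H) ⊆ Set.range ι)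
    (h0 : (0 : ℂ) ∈ presolventSet A)
    (hcpt : ∃ μ ∈ presolventSet A, IsCompactOperator (⇑(resolventOf A μ) : H → H))
    (Binv : H →L[ℂ] W) (hBinv : ∀ x, ι (Binv x) = resolventOf A 0 x)
    (L : ℝ) (hL : 0 < L) (d : ℝ) (hd : d = L * ‖Binv‖) :
    {z : ℂ | z ∉ presolventSet A} ∩ Metric.closedBall 0 L ⊆
      invSet {z : ℂ | ∃ w : W, ‖ι w‖ = 1 ∧ ‖w‖ ≤ d ∧
        z = (inner ℂ (ι w) (resolventOf A 0 (ι w)) : ℂ)} :=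
  spectrum_inter_ball_subset_inv_restricted_numRange_general A ι h0 hcpt Binv hBinv L d hd
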